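/- arXiv:1909.08139 — 6 statements merged into one kernel-verified Lean document; each statement's English description precedes it below -/
import Mathlib

section
/- For real numbers x, y, z with 0 ≤ x, y, z ≤ 1, one has (x+y+z)(3-(x+y+z)) ≤ 3(x(1-y) + y(1-z) + z(1-x)). -/
theorem mul_add_mul_add_mul_le_sq_add_sq_add_sq {R : Type*} [CommRing R] [LinearOrder R]
    [IsStrictOrderedRing R] (x y z : R) :
    x * y + y * z + z * x ≤ x ^ 2 + y ^ 2 + z ^ 2 := by
  nlinarith [sq_nonneg (x - y), sq_nonneg (y - z), sq_nonneg (z - x)]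

theorem key_algebraic_inequality_general (x y z : ℝ) :
    (x + y + z) * (3 - (x + y + z)) ≤ 3 * (x * (1 - y) + y * (1 - z) + z * (1 - x)) := by
  -- the right side minus the left side is exactly `x² + y² + z² - (x y + y z + z x)`
  linear_combination mul_add_mul_add_mul_le_sq_add_sq_add_sq x y z

/-- Key algebraic inequality underlying the parabolic bound `e_p ≥ 2 g_t (1 - g_t)`
for two-qubit gates. -/
theorem key_algebraic_inequality (x y z : ℝ)
    (hx0 : 0 ≤ x) (hx1 : x ≤ 1) (hy0 : 0 ≤ y) (hy1 : y ≤ 1)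
    (hz0 : 0 ≤ z) (hz1 : z ≤ 1) :
    (x + y + z) * (3 - (x + y + z)) ≤ 3 * (x * (1 - y) + y * (1 - z) + z * (1 - x)) :=
  key_algebraic_inequality_general x y z
end

section
/- Let c₁, c₂, c₃ be real numbers, and define e_p = (2/3)(sin²c₁ cos²c₂ + sin²c₂ cos²c₃ + sin²c₃ cos²c₁) and g_t = (1/3)(sin²c₁ + sin²c₂ + sin²c₃). Then e_p ≥ 2 g_t (1 - g_t). -/
open Real

/-! Writing `xᵢ = sin² cᵢ`, so that `cos² cᵢ = 1 - xᵢ`, the inequality becomes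
`(x₁ + x₂ + x₃)² ≥ 3 (x₁x₂ + x₂x₃ + x₃x₁)`, which holds for all real `xᵢ`. -/

theorem three_mul_add_mul_le_sq_add (a b c : ℝ) :
    3 * (a * b + b * c + c * a) ≤ (a + b + c) ^ 2 := by
  nlinarith [sq_nonneg (a - b), sq_nonneg (b - c), sq_nonneg (c - a)]

theorem parabola_mean_le_cyclic_sum (x y z : ℝ) :
    2 * ((x + y + z) / 3) * (1 - (x + y + z) / 3) ≤
      (2 / 3) * (x * (1 - y) + y * (1 - z) + z * (1 - x)) := by
  linear_combination (2 / 9) * three_mul_add_mul_le_sq_add x y z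

/-- Parabolic lower bound on the entangling power in terms of the gate typicality,
expressed via the Cartan (Euler) angles of a two-qubit gate. -/
theorem ep_ge_parabola_of_gt (c₁ c₂ c₃ : ℝ)
    (e_p g_t : ℝ)
    (hep : e_p = (2 / 3) * (sin c₁ ^ 2 * cos c₂ ^ 2 + sin c₂ ^ 2 * cos c₃ ^ 2 +
      sin c₃ ^ 2 * cos c₁ ^ 2))
    (hgt : g_t = (1 / 3) * (sin c₁ ^ 2 + sin c₂ ^ 2 + sin c₃ ^ 2)) :
    e_p ≥ 2 * g_t * (1 - g_t) := by
  have key := parabola_mean_le_cyclic_sum (sin c₁ ^ 2) (sin c₂ ^ 2) (sin c₃ ^ 2)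
  rw [hep, hgt, cos_sq', cos_sq', cos_sq']
  linarith
end

section
/- Let c₁, c₂, c₃ be real numbers and define e_p and g_t as e_p = (2/3)(sin²c₁ cos²c₂ + sin²c₂ cos²c₃ + sin²c₃ cos²c₁), g_t = (1/3)(sin²c₁ + sin²c₂ + sin²c₃). Then e_p + 2 g_t ≤ 2 and g_t ≥ e_p / 2. -/
/-!
Writing `sᵢ = sin² cᵢ` and `1 - sᵢ = cos² cᵢ`, the two gaps are cyclic sums of products:
`2 - e_p - 2 g_t = (2/3) Σ cos² cᵢ cos² cᵢ₊₁` and `g_t - e_p / 2 = (1/3) Σ sin² cᵢ sin² cᵢ₊₁`,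
so both are nonnegative.
-/

open Real

section CyclicIdentities

variable {R : Type*} [CommRing R] {a₁ a₂ a₃ b₁ b₂ b₃ : R}

theorem cross_add_cyclic_mul_eq_sum (h₁ : a₁ + b₁ = 1) (h₂ : a₂ + b₂ = 1) (h₃ : a₃ + b₃ = 1) :
    a₁ * b₂ + a₂ * b₃ + a₃ * b₁ + (a₁ * a₂ + a₂ * a₃ + a₃ * a₁) = a₁ + a₂ + a₃ := by
  linear_combination a₁ * h₂ + a₂ * h₃ + a₃ * h₁

theorem cross_add_sum_add_cyclic_mul_eq_three (h₁ : a₁ + b₁ = 1) (h₂ : a₂ + b₂ = 1)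
    (h₃ : a₃ + b₃ = 1) :
    a₁ * b₂ + a₂ * b₃ + a₃ * b₁ + (a₁ + a₂ + a₃) + (b₁ * b₂ + b₂ * b₃ + b₃ * b₁) = 3 := by
  linear_combination (1 + b₂) * h₁ + (1 + b₃) * h₂ + (1 + b₁) * h₃

end CyclicIdentities

/-- Linear boundary relations of the set `K₂` of two-qubit gates in the `(e_p, g_t)` plane,
expressed via the Cartan (Euler) angles. -/
theorem linear_boundaries_K2 (c₁ c₂ c₃ : ℝ)
    (e_p g_t : ℝ)
    (hep : e_p = (2 / 3) * (sin c₁ ^ 2 * cos c₂ ^ 2 + sin c₂ ^ 2 * cos c₃ ^ 2 +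
      sin c₃ ^ 2 * cos c₁ ^ 2))
    (hgt : g_t = (1 / 3) * (sin c₁ ^ 2 + sin c₂ ^ 2 + sin c₃ ^ 2)) :
    e_p + 2 * g_t ≤ 2 ∧ g_t ≥ e_p / 2 := by
  subst hep hgt
  have h₁ := sin_sq_add_cos_sq c₁
  have h₂ := sin_sq_add_cos_sq c₂
  have h₃ := sin_sq_add_cos_sq c₃
  have hcos : 0 ≤ cos c₁ ^ 2 * cos c₂ ^ 2 + cos c₂ ^ 2 * cos c₃ ^ 2 + cos c₃ ^ 2 * cos c₁ ^ 2 := by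
    positivity
  have hsin : 0 ≤ sin c₁ ^ 2 * sin c₂ ^ 2 + sin c₂ ^ 2 * sin c₃ ^ 2 + sin c₃ ^ 2 * sin c₁ ^ 2 := by
    positivity
  constructor
  · linarith [cross_add_sum_add_cyclic_mul_eq_three h₁ h₂ h₃]
  · linarith [cross_add_cyclic_mul_eq_sum h₁ h₂ h₃]
end

section
/- For the fractional power of the swap gate U_t = exp(itS) on C^N ⊗ C^N, the entangling power and gate typicality satisfy e_p(U_t) = (1/2)sin²(2t) and g_t(U_t) = sin²t, and consequently e_p(U_t) = 2 g_t(U_t)(1 - g_t(U_t)) for all real t and all N ≥ 2. -/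
open Matrix Complex

noncomputable section

/-- The swap operator `S` on `ℂ^N ⊗ ℂ^N`: `⟨iα|S|jβ⟩ = δ_{iβ} δ_{αj}`. -/
def swapOp (N : ℕ) : Matrix (Fin N × Fin N) (Fin N × Fin N) ℂ :=
  Matrix.of fun p q => if p.1 = q.2 ∧ p.2 = q.1 then 1 else 0

/-- The reshuffled matrix: `(U^R)_{ij,αβ} = U_{iα,jβ}`. -/
def resh (N : ℕ) (U : Matrix (Fin N × Fin N) (Fin N × Fin N) ℂ) :
    Matrix (Fin N × Fin N) (Fin N × Fin N) ℂ :=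
  Matrix.of fun p q => U (p.1, q.1) (p.2, q.2)

/-- Linear operator entanglement `E(U) = 1 - (1/N⁴) Tr((U^R U^{R†})²)`. -/
def EE (N : ℕ) (U : Matrix (Fin N × Fin N) (Fin N × Fin N) ℂ) : ℝ :=
  1 - (1 / (N : ℝ) ^ 4) * (((resh N U * (resh N U)ᴴ) ^ 2).trace).re

/-- Entangling power `e_p(U) = [E(U) + E(US) − E(S)] / E(S)`. -/
def ep (N : ℕ) (U : Matrix (Fin N × Fin N) (Fin N × Fin N) ℂ) : ℝ :=
  (EE N U + EE N (U * swapOp N) - EE N (swapOp N)) / EE N (swapOp N)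

/-- Gate typicality `g_t(U) = [E(U) − E(US) + E(S)] / (2 E(S))`. -/
def gt' (N : ℕ) (U : Matrix (Fin N × Fin N) (Fin N × Fin N) ℂ) : ℝ :=
  (EE N U - EE N (U * swapOp N) + EE N (swapOp N)) / (2 * EE N (swapOp N))

/-!
Reshuffling sends `1` to `P = |v⟩⟨v|`, `v = ∑ᵢ |ii⟩`, and fixes `S`; these satisfy `P² = N P`,
`S² = 1` and `SP = PS = P`. Hence for `U = a + bS` with `|a|² + |b|² = 1` and `Re(a b̄) = 0`
(the unitaries in the span of `1` and `S`) one gets `U^R U^{R†} = |a|² N P + |b|²`, so `E(U)` is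
an explicit polynomial in `|a|²`, `|b|²`, `N`. Since `US = b + aS`, the same formula gives
`E(US)`, and it follows that `e_p(U) = 2|a|²|b|²` and `g_t(U) = |b|²`. Finally `S² = 1` gives
`exp(itS) = cos t + i sin t · S`.
-/

open ComplexConjugate

namespace NormedSpace

variable {A : Type*} [Ring A] [Algebra ℂ A] [TopologicalSpace A] [IsTopologicalRing A]
  [ContinuousSMul ℂ A] [T2Space A]

theorem exp_smul_of_mul_self_eq_one {s : A} (hs : s * s = 1) (c : ℂ) :
    exp (c • s) = Complex.cosh c • (1 : A) + Complex.sinh c • s := by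
  have h_even (k : ℕ) : s ^ (2 * k) = 1 := by rw [pow_mul, sq, hs, one_pow]
  have h_odd (k : ℕ) : s ^ (2 * k + 1) = s := by rw [pow_succ, h_even, one_mul]
  rw [exp_eq_tsum ℂ]
  refine HasSum.tsum_eq (HasSum.even_add_odd ?_ ?_)
  · convert (Complex.hasSum_cosh c).smul_const (1 : A) using 2 with k
    rw [smul_pow, h_even, smul_smul, div_eq_inv_mul]
  · convert (Complex.hasSum_sinh c).smul_const s using 2 with k
    rw [smul_pow, h_odd, smul_smul, div_eq_inv_mul]

theorem exp_I_mul_smul_of_mul_self_eq_one {s : A} (hs : s * s = 1) (t : ℝ) :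
    exp ((I * t) • s) = (Real.cos t : ℂ) • (1 : A) + ((Real.sin t : ℂ) * I) • s := by
  rw [exp_smul_of_mul_self_eq_one hs, mul_comm I, Complex.cosh_mul_I, Complex.sinh_mul_I,
    ← Complex.ofReal_cos, ← Complex.ofReal_sin]

end NormedSpace

theorem Complex.re_mul_conj_comm (a b : ℂ) : (a * conj b).re = (b * conj a).re := by
  rw [← conj_re, map_mul, conj_conj, mul_comm]

def maxEntOp (N : ℕ) : Matrix (Fin N × Fin N) (Fin N × Fin N) ℂ :=
  Matrix.of fun p q => if p.1 = p.2 ∧ q.1 = q.2 then 1 else 0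

section SwapAlgebra

variable {N : ℕ}

theorem swapOp_mul_self : swapOp N * swapOp N = 1 := by
  ext ⟨i, α⟩ ⟨j, β⟩
  simp [Matrix.mul_apply, swapOp, Matrix.one_apply, Prod.ext_iff, ite_and,
    Fintype.sum_prod_type, eq_comm]

theorem maxEntOp_mul_self : maxEntOp N * maxEntOp N = (N : ℂ) • maxEntOp N := by
  ext ⟨i, α⟩ ⟨j, β⟩
  by_cases i = α <;> simp [Matrix.mul_apply, maxEntOp, Fintype.sum_prod_type, ite_and, *]

theorem swapOp_mul_maxEntOp : swapOp N * maxEntOp N = maxEntOp N := by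
  ext ⟨i, α⟩ ⟨j, β⟩
  by_cases i = α <;>
    simp [Matrix.mul_apply, maxEntOp, swapOp, Fintype.sum_prod_type, ite_and, eq_comm, *]

theorem maxEntOp_mul_swapOp : maxEntOp N * swapOp N = maxEntOp N := by
  ext ⟨i, α⟩ ⟨j, β⟩
  simp [Matrix.mul_apply, maxEntOp, swapOp, Fintype.sum_prod_type, ite_and, eq_comm]

theorem conjTranspose_swapOp : (swapOp N)ᴴ = swapOp N := by
  ext ⟨i, α⟩ ⟨j, β⟩
  simp [swapOp, apply_ite (star : ℂ → ℂ), eq_comm, and_comm]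

theorem conjTranspose_maxEntOp : (maxEntOp N)ᴴ = maxEntOp N := by
  ext ⟨i, α⟩ ⟨j, β⟩
  simp [maxEntOp, apply_ite (star : ℂ → ℂ), and_comm]

theorem trace_maxEntOp : (maxEntOp N).trace = N := by
  simp [Matrix.trace, maxEntOp, Fintype.sum_prod_type, -Finset.sum_boole]

theorem resh_one : resh N 1 = maxEntOp N := by
  ext ⟨i, α⟩ ⟨j, β⟩
  simp [resh, maxEntOp, Matrix.one_apply, Prod.ext_iff]

theorem resh_swapOp : resh N (swapOp N) = swapOp N := by
  ext ⟨i, α⟩ ⟨j, β⟩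
  simp [resh, swapOp, eq_comm]

theorem resh_smul_add_smul (a b : ℂ) (A B : Matrix (Fin N × Fin N) (Fin N × Fin N) ℂ) :
    resh N (a • A + b • B) = a • resh N A + b • resh N B :=
  rfl

theorem trace_sq_smul_maxEntOp_add_smul_one (α β : ℝ) :
    (((α : ℂ) • maxEntOp N + (β : ℂ) • 1) ^ 2).trace =
      ((α ^ 2 * N ^ 2 + 2 * α * β * N + β ^ 2 * N ^ 2 : ℝ) : ℂ) := by
  simp only [sq, mul_add, add_mul, smul_mul_smul_comm, maxEntOp_mul_self, mul_one, one_mul,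
    smul_smul, trace_add, trace_smul, trace_maxEntOp, trace_one, smul_eq_mul,
    Fintype.card_prod, Fintype.card_fin]
  push_cast
  ring

theorem smul_maxEntOp_add_smul_swapOp_mul_conjTranspose (a b : ℂ) :
    (a • maxEntOp N + b • swapOp N) * (a • maxEntOp N + b • swapOp N)ᴴ =
      ((normSq a * N + 2 * (a * conj b).re : ℝ) : ℂ) • maxEntOp N + (normSq b : ℂ) • 1 := by
  simp only [conjTranspose_add, conjTranspose_smul, conjTranspose_swapOp, conjTranspose_maxEntOp,
    mul_add, add_mul, smul_mul_smul_comm, maxEntOp_mul_self, swapOp_mul_self, swapOp_mul_maxEntOp,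
    maxEntOp_mul_swapOp, smul_smul, star_def]
  match_scalars
  · simp only [re_eq_add_conj, ← mul_conj, map_mul, conj_conj]
    ring
  · simp [mul_conj]

theorem EE_smul_one_add_smul_swapOp (a b : ℂ) (horth : (a * conj b).re = 0) :
    EE N (a • 1 + b • swapOp N) = 1 -
      (normSq a ^ 2 * N ^ 4 + 2 * normSq a * normSq b * N ^ 2 + normSq b ^ 2 * N ^ 2) / N ^ 4 := by
  rw [EE, resh_smul_add_smul, resh_one, resh_swapOp,
    smul_maxEntOp_add_smul_swapOp_mul_conjTranspose, horth, trace_sq_smul_maxEntOp_add_smul_one,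
    ofReal_re]
  ring

theorem EE_swapOp : EE N (swapOp N) = 1 - N ^ 2 / N ^ 4 := by
  simpa using EE_smul_one_add_smul_swapOp (N := N) 0 1 (by simp)

theorem smul_one_add_smul_swapOp_mul_swapOp (a b : ℂ) :
    (a • 1 + b • swapOp N) * swapOp N = b • 1 + a • swapOp N := by
  rw [add_mul, smul_mul_assoc, smul_mul_assoc, one_mul, swapOp_mul_self, add_comm]

theorem EE_swapOp_pos (hN : 2 ≤ N) : 0 < EE N (swapOp N) := by
  have hN' : (2 : ℝ) ≤ N := by exact_mod_cast hN
  have hN2 : (4 : ℝ) ≤ N ^ 2 := by nlinarith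
  rw [EE_swapOp, sub_pos, div_lt_one (by positivity)]
  nlinarith

theorem ep_smul_one_add_smul_swapOp {a b : ℂ} (hN : 2 ≤ N) (hnorm : normSq a + normSq b = 1)
    (horth : (a * conj b).re = 0) : ep N (a • 1 + b • swapOp N) = 2 * normSq a * normSq b := by
  rw [ep, smul_one_add_smul_swapOp_mul_swapOp, EE_smul_one_add_smul_swapOp a b horth,
    EE_smul_one_add_smul_swapOp b a ((re_mul_conj_comm b a).trans horth),
    div_eq_iff (EE_swapOp_pos hN).ne', EE_swapOp]
  have hN0 : (N : ℝ) ≠ 0 := by positivity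
  field_simp
  linear_combination (-(N ^ 2 + 1) * (normSq a + normSq b + 1) : ℝ) * hnorm

theorem gt'_smul_one_add_smul_swapOp {a b : ℂ} (hN : 2 ≤ N) (hnorm : normSq a + normSq b = 1)
    (horth : (a * conj b).re = 0) : gt' N (a • 1 + b • swapOp N) = normSq b := by
  rw [gt', smul_one_add_smul_swapOp_mul_swapOp, EE_smul_one_add_smul_swapOp a b horth,
    EE_smul_one_add_smul_swapOp b a ((re_mul_conj_comm b a).trans horth),
    div_eq_iff (mul_ne_zero two_ne_zero (EE_swapOp_pos hN).ne'), EE_swapOp]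
  have hN0 : (N : ℝ) ≠ 0 := by positivity
  field_simp
  linear_combination (-(N ^ 2 - 1) * (1 + normSq a - normSq b) : ℝ) * hnorm

end SwapAlgebra

/-- For the fractional power of swap `U_t = exp(itS)` one has `e_p(U_t) = (1/2) sin²(2t)`,
`g_t(U_t) = sin² t`, and hence `e_p(U_t) = 2 g_t(U_t)(1 − g_t(U_t))`, for all `t` and `N ≥ 2`. -/
theorem swap_powers_on_parabola (N : ℕ) (hN : 2 ≤ N) (t : ℝ) :
    ep N (NormedSpace.exp ((Complex.I * (t : ℂ)) • swapOp N)) = (1 / 2) * Real.sin (2 * t) ^ 2 ∧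
    gt' N (NormedSpace.exp ((Complex.I * (t : ℂ)) • swapOp N)) = Real.sin t ^ 2 ∧
    ep N (NormedSpace.exp ((Complex.I * (t : ℂ)) • swapOp N)) =
      2 * gt' N (NormedSpace.exp ((Complex.I * (t : ℂ)) • swapOp N)) *
        (1 - gt' N (NormedSpace.exp ((Complex.I * (t : ℂ)) • swapOp N))) := by
  have hcos : normSq (Real.cos t : ℂ) = Real.cos t ^ 2 := by rw [normSq_ofReal, sq]
  have hsin : normSq ((Real.sin t : ℂ) * I) = Real.sin t ^ 2 := by
    rw [normSq_mul, normSq_I, mul_one, normSq_ofReal, sq]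
  have hnorm : normSq (Real.cos t : ℂ) + normSq ((Real.sin t : ℂ) * I) = 1 := by
    rw [hcos, hsin, Real.cos_sq_add_sin_sq]
  have horth : ((Real.cos t : ℂ) * conj ((Real.sin t : ℂ) * I)).re = 0 := by simp
  rw [NormedSpace.exp_I_mul_smul_of_mul_self_eq_one swapOp_mul_self,
    ep_smul_one_add_smul_swapOp hN hnorm horth, gt'_smul_one_add_smul_swapOp hN hnorm horth,
    hcos, hsin]
  refine ⟨by rw [Real.sin_two_mul]; ring, rfl, by rw [Real.cos_sq']; ring⟩
end
end

section
/- The reshuffling of the discrete Fourier transform matrix F of order N², with entries F_{mn} = (1/N) exp(2πi mn/N²), is again unitary. Consequently the operator entanglement of F is maximal: E(F) = 1 − 1/N². -/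
open Matrix Complex

noncomputable section

/-- The discrete Fourier transform of order `N²` in bipartite index notation,
with combined index `m = k + αN`: `⟨kα|F|jβ⟩ = (1/N) exp(2πi (k+αN)(j+βN)/N²)`. -/
def dft (N : ℕ) : Matrix (Fin N × Fin N) (Fin N × Fin N) ℂ :=
  Matrix.of fun p q =>
    (1 / (N : ℂ)) * Complex.exp (2 * Real.pi * Complex.I *
      (((p.1.val : ℂ) + (p.2.val : ℂ) * N) * ((q.1.val : ℂ) + (q.2.val : ℂ) * N)) / (N : ℂ) ^ 2)

/-! Split the combined indices as `m = k + αN`, `n = j + βN`. Modulo integers,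
`mn / N² ≡ kj / N² + (kβ + αj) / N`, so each entry of `F^R` at `(kj, αβ)` is a twiddle phase
`e^{2πi kj/N²}` times the entry of `F_N ⊗ F_N` at `(kj, βα)`, where `F_N` is the unitary DFT
of order `N`. Thus `F^R` is a diagonal unitary times a column permutation of a Kronecker
product of unitaries. -/

open scoped Kronecker

theorem Matrix.diagonal_mem_unitaryGroup {n α : Type*} [Fintype n] [DecidableEq n] [CommRing α]
    [StarRing α] {d : n → α} (hd : ∀ i, d i ∈ unitary α) :
    diagonal d ∈ unitaryGroup n α := by
  rw [mem_unitaryGroup_iff, star_eq_conjTranspose, diagonal_conjTranspose, diagonal_mul_diagonal,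
    ← diagonal_one]
  exact congrArg diagonal (funext fun i => Unitary.mul_star_self_of_mem (hd i))

theorem Matrix.submatrix_equiv_mem_unitaryGroup {m n α : Type*} [Fintype m] [DecidableEq m]
    [Fintype n] [DecidableEq n] [CommRing α] [StarRing α] {A : Matrix n n α}
    (hA : A ∈ unitaryGroup n α) (e₁ e₂ : m ≃ n) : A.submatrix e₁ e₂ ∈ unitaryGroup m α := by
  rw [mem_unitaryGroup_iff, star_eq_conjTranspose, conjTranspose_submatrix, submatrix_mul_equiv,
    ← star_eq_conjTranspose, mem_unitaryGroup_iff.mp hA, submatrix_one_equiv]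

theorem exp_ofReal_mul_I_mem_unitary (x : ℝ) : exp (x * I) ∈ unitary ℂ := by
  rw [Unitary.mem_iff_star_mul_self, star_def, ← exp_conj, ← exp_add]
  simp

theorem inv_ofReal_sqrt_mul_self {x : ℝ} (hx : 0 ≤ x) :
    (Real.sqrt x : ℂ)⁻¹ * (Real.sqrt x : ℂ)⁻¹ = (x : ℂ)⁻¹ := by
  rw [← mul_inv, ← ofReal_mul, Real.mul_self_sqrt hx]

theorem Fin.natCast_dvd_sub_iff {N : ℕ} (j j' : Fin N) :
    (N : ℤ) ∣ (j : ℤ) - j' ↔ j = j' := by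
  rw [← Nat.modEq_iff_dvd]
  exact ⟨fun h => Fin.ext (h.eq_of_lt_of_lt j'.isLt j.isLt).symm, fun h => h ▸ rfl⟩

theorem sum_exp_two_pi_I_mul_div (N : ℕ) (d : ℤ) :
    ∑ a : Fin N, exp (2 * Real.pi * I * d * a / N) = if (N : ℤ) ∣ d then (N : ℂ) else 0 := by
  rcases Nat.eq_zero_or_pos N with rfl | hN
  · simp
  have hζ := isPrimitiveRoot_exp N hN.ne'
  set w := exp (2 * Real.pi * I / N) ^ d with hw
  have hpow (a : ℕ) : exp (2 * Real.pi * I * d * a / N) = w ^ a := by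
    rw [← zpow_natCast, ← _root_.zpow_mul, ← exp_int_mul]
    congr 1
    push_cast
    ring
  simp_rw [hpow, Fin.sum_univ_eq_sum_range (w ^ ·)]
  split_ifs with hd
  · simp [hw, (hζ.zpow_eq_one_iff_dvd d).mpr hd]
  · have hwN : w ^ N = 1 := by
      rw [hw, ← zpow_natCast, ← _root_.zpow_mul, mul_comm d, _root_.zpow_mul, zpow_natCast,
        hζ.pow_eq_one, _root_.one_zpow]
    rw [geom_sum_eq (mt (hζ.zpow_eq_one_iff_dvd d).mp hd), hwN, sub_self, zero_div]

def dftMatrix (N : ℕ) : Matrix (Fin N) (Fin N) ℂ :=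
  of fun k j => (Real.sqrt N : ℂ)⁻¹ * exp (2 * Real.pi * I * k * j / N)

theorem dftMatrix_mem_unitaryGroup (N : ℕ) : dftMatrix N ∈ unitaryGroup (Fin N) ℂ := by
  rw [mem_unitaryGroup_iff]
  ext k k'
  have hN : (N : ℂ) ≠ 0 := Nat.cast_ne_zero.mpr k.pos.ne'
  have hterm (β : Fin N) : dftMatrix N k β * star (dftMatrix N k' β)
      = (N : ℂ)⁻¹ * exp (2 * Real.pi * I * ((k : ℤ) - k' : ℤ) * β / N) := by
    simp only [dftMatrix, of_apply, star_mul', RCLike.star_def, ← exp_conj, map_inv₀, conj_ofReal]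
    rw [mul_mul_mul_comm, inv_ofReal_sqrt_mul_self N.cast_nonneg, ofReal_natCast, ← exp_add]
    congr 2
    simp only [map_div₀, map_mul, conj_ofReal, conj_I, map_natCast, map_ofNat]
    push_cast
    ring
  simp only [mul_apply, star_apply, hterm, ← Finset.mul_sum, sum_exp_two_pi_I_mul_div,
    Fin.natCast_dvd_sub_iff, one_apply]
  split_ifs <;> simp [hN]

def twiddle (N : ℕ) (p : Fin N × Fin N) : ℂ :=
  exp (2 * Real.pi * I * p.1 * p.2 / N ^ 2)

theorem twiddle_mem_unitary (N : ℕ) (p : Fin N × Fin N) : twiddle N p ∈ unitary ℂ := by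
  rw [twiddle]
  convert exp_ofReal_mul_I_mem_unitary (2 * Real.pi * p.1 * p.2 / N ^ 2) using 2
  push_cast
  ring

theorem resh_dft (N : ℕ) :
    resh N (dft N) = diagonal (twiddle N) * (dftMatrix N ⊗ₖ dftMatrix N).submatrix id Prod.swap := by
  ext ⟨k, j⟩ ⟨α, β⟩
  have hN : (N : ℂ) ≠ 0 := Nat.cast_ne_zero.mpr k.pos.ne'
  have hphase : 2 * Real.pi * I * ((k + α * N) * (j + β * N)) / N ^ 2
      = 2 * Real.pi * I * k * j / N ^ 2 + 2 * Real.pi * I * k * β / N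
        + 2 * Real.pi * I * j * α / N + (α * β : ℕ) * (2 * Real.pi * I) := by
    field_simp
    push_cast
    ring
  simp only [resh, dft, twiddle, dftMatrix, of_apply, diagonal_mul, submatrix_apply,
    kroneckerMap_apply, id, Prod.fst_swap, Prod.snd_swap]
  rw [hphase, exp_add, exp_add, exp_add, exp_nat_mul_two_pi_mul_I, one_div,
    ← ofReal_natCast, ← inv_ofReal_sqrt_mul_self N.cast_nonneg]
  ring

theorem EE_eq_of_resh_mem_unitaryGroup {N : ℕ} {U : Matrix (Fin N × Fin N) (Fin N × Fin N) ℂ}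
    (hU : resh N U ∈ unitaryGroup (Fin N × Fin N) ℂ) : EE N U = 1 - 1 / (N : ℝ) ^ 2 := by
  rw [EE, ← star_eq_conjTranspose, mem_unitaryGroup_iff.mp hU, one_pow, trace_one,
    Fintype.card_prod, Fintype.card_fin, natCast_re, Nat.cast_mul]
  rcases eq_or_ne (N : ℝ) 0 with hN | hN
  · simp [hN]
  · field_simp

theorem dft_reshuffle_unitary_general (N : ℕ) :
    resh N (dft N) ∈ Matrix.unitaryGroup (Fin N × Fin N) ℂ ∧
    EE N (dft N) = 1 - 1 / (N : ℝ) ^ 2 := by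
  have hW := dftMatrix_mem_unitaryGroup N
  have hU : resh N (dft N) ∈ unitaryGroup (Fin N × Fin N) ℂ := by
    rw [resh_dft]
    exact mul_mem (diagonal_mem_unitaryGroup (twiddle_mem_unitary N))
      (submatrix_equiv_mem_unitaryGroup (kronecker_mem_unitary hW hW) (.refl _) (.prodComm _ _))
  exact ⟨hU, EE_eq_of_resh_mem_unitaryGroup hU⟩

/-- The reshuffling of the discrete Fourier transform matrix is again unitary, and hence
the operator entanglement of `F` is maximal: `E(F) = 1 − 1/N²`. -/
theorem dft_reshuffle_unitary (N : ℕ) (hN : 0 < N) :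
    resh N (dft N) ∈ Matrix.unitaryGroup (Fin N × Fin N) ℂ ∧
    EE N (dft N) = 1 - 1 / (N : ℝ) ^ 2 :=
  dft_reshuffle_unitary_general N
end
end

section
/- Let S be the swap on C^N⊗C^N and H a Hermitian operator with Tr(H) = 0 and Tr(HS) = 0. For the perturbation δU_t = iε(cos t · H + i sin t · SH) of U_t = exp(itS), the first-order variation of E(U) = 1 − (1/N⁴)Tr((U^R U^{R†})²) vanishes: Re Tr(δU_t^R U_t^{R†} U_t^R U_t^{R†}) = 0. -/
open Matrix Complex

noncomputable section

/-- The fractional power of swap `U_t = exp(itS)`. -/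
def Ut (N : ℕ) (t : ℝ) : Matrix (Fin N × Fin N) (Fin N × Fin N) ℂ :=
  NormedSpace.exp ((Complex.I * (t : ℂ)) • swapOp N)

/-- The perturbation `δU_t = iε(cos t · H + i sin t · SH)`. -/
def deltaUt (N : ℕ) (t ε : ℝ) (H : Matrix (Fin N × Fin N) (Fin N × Fin N) ℂ) :
    Matrix (Fin N × Fin N) (Fin N × Fin N) ℂ :=
  (Complex.I * (ε : ℂ)) • ((Real.cos t : ℂ) • H + (Complex.I * (Real.sin t : ℂ)) • (swapOp N * H))

/-! `U_t^R = cos t · 1^R + i sin t · S`, and products of three elements of `span {1^R, S}` stay in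
that span because `S² = 1`, `S 1^R = 1^R S = 1^R` and `(1^R)² = N 1^R`. Hence
`U_t^{R†} U_t^R U_t^{R†} = a 1^R + b S`, while `Tr(X^R 1^R) = Tr X` and `Tr(X^R S) = Tr(XS)`;
both vanish for `X = δU_t` by the hypotheses on `H`, so even the full trace is zero. -/

theorem NormedSpace.exp_I_mul_smul_of_mul_self {𝔸 : Type*} [NormedRing 𝔸]
    [NormedAlgebra ℂ 𝔸] [CompleteSpace 𝔸] {A : 𝔸} (h : A * A = 1) (t : ℝ) :
    NormedSpace.exp ((Complex.I * t) • A) =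
      (Real.cos t : ℂ) • (1 : 𝔸) + (Complex.I * Real.sin t) • A := by
  have h_even (n : ℕ) : A ^ (2 * n) = 1 := by rw [pow_mul, sq, h, one_pow]
  have h_odd (n : ℕ) : A ^ (2 * n + 1) = A := by rw [pow_succ, h_even, one_mul]
  rw [NormedSpace.exp_eq_tsum ℂ]
  refine HasSum.tsum_eq (HasSum.even_add_odd ?_ ?_)
  · convert (Complex.hasSum_cos (t : ℂ)).smul_const (1 : 𝔸) using 2 with n
    · rw [smul_pow, h_even, smul_smul, mul_pow, pow_mul, Complex.I_sq]
      field_simp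
    · rw [Complex.ofReal_cos]
  · convert ((Complex.hasSum_sin (t : ℂ)).mul_left Complex.I).smul_const A using 2 with n
    · rw [smul_pow, h_odd, smul_smul, mul_pow, pow_succ, pow_mul, Complex.I_sq]
      field_simp
    · rw [Complex.ofReal_sin]

/-- `1^R = N |Φ⁺⟩⟨Φ⁺|`, with `|Φ⁺⟩` the maximally entangled state. -/
def phiPlusDyad (N : ℕ) : Matrix (Fin N × Fin N) (Fin N × Fin N) ℂ :=
  Matrix.of fun p q => if p.1 = p.2 ∧ q.1 = q.2 then 1 else 0

namespace Reshuffle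

variable {N : ℕ}

local notation "S" => swapOp N
local notation "J" => phiPlusDyad N

theorem swapOp_mul_swapOp : S * S = 1 := by
  ext ⟨i, a⟩ ⟨j, b⟩
  simp [mul_apply, swapOp, Fintype.sum_prod_type, one_apply, Prod.ext_iff, ite_and, eq_comm]

theorem conjTranspose_swapOp : Sᴴ = S := by
  ext ⟨i, a⟩ ⟨j, b⟩
  simp only [conjTranspose_apply, swapOp, of_apply]
  split_ifs <;> simp_all

theorem conjTranspose_phiPlusDyad : Jᴴ = J := by
  ext ⟨i, a⟩ ⟨j, b⟩
  simp only [conjTranspose_apply, phiPlusDyad, of_apply]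
  split_ifs <;> simp_all

theorem phiPlusDyad_mul_self : J * J = (N : ℂ) • J := by
  ext ⟨i, a⟩ ⟨j, b⟩
  simp [mul_apply, phiPlusDyad, Fintype.sum_prod_type, ite_and]
  split_ifs <;> simp_all

theorem swapOp_mul_phiPlusDyad : S * J = J := by
  ext ⟨i, a⟩ ⟨j, b⟩
  simp [mul_apply, swapOp, phiPlusDyad, Fintype.sum_prod_type, ite_and, eq_comm]
  split_ifs <;> simp_all

theorem phiPlusDyad_mul_swapOp : J * S = J := by
  ext ⟨i, a⟩ ⟨j, b⟩
  simp [mul_apply, swapOp, phiPlusDyad, Fintype.sum_prod_type, ite_and, eq_comm]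

theorem resh_add (X Y : Matrix (Fin N × Fin N) (Fin N × Fin N) ℂ) :
    resh N (X + Y) = resh N X + resh N Y := rfl

theorem resh_smul (c : ℂ) (X : Matrix (Fin N × Fin N) (Fin N × Fin N) ℂ) :
    resh N (c • X) = c • resh N X := rfl

theorem resh_one : resh N 1 = J := by
  ext ⟨i, a⟩ ⟨j, b⟩
  simp [resh, phiPlusDyad, one_apply, Prod.ext_iff]

theorem resh_swapOp : resh N S = S := by
  ext ⟨i, a⟩ ⟨j, b⟩
  by_cases h₁ : i = b <;> by_cases h₂ : j = a <;> simp [resh, swapOp, h₁, h₂, eq_comm]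

theorem trace_resh_mul_phiPlusDyad (X : Matrix (Fin N × Fin N) (Fin N × Fin N) ℂ) :
    (resh N X * J).trace = X.trace := by
  simp [Matrix.trace, mul_apply, resh, phiPlusDyad, Fintype.sum_prod_type, ite_and]

theorem trace_resh_mul_swapOp (X : Matrix (Fin N × Fin N) (Fin N × Fin N) ℂ) :
    (resh N X * S).trace = (X * S).trace := by
  simp [Matrix.trace, mul_apply, resh, swapOp, Fintype.sum_prod_type, ite_and]

theorem conjTranspose_mem_span {X : Matrix (Fin N × Fin N) (Fin N × Fin N) ℂ}
    (hX : X ∈ Submodule.span ℂ {J, S}) : Xᴴ ∈ Submodule.span ℂ {J, S} := by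
  obtain ⟨a, b, rfl⟩ := Submodule.mem_span_pair.1 hX
  refine Submodule.mem_span_pair.2 ⟨star a, star b, ?_⟩
  simp [conjTranspose_phiPlusDyad, conjTranspose_swapOp]

theorem mul_mem_span_one_phiPlusDyad {X Y : Matrix (Fin N × Fin N) (Fin N × Fin N) ℂ}
    (hX : X ∈ Submodule.span ℂ {J, S}) (hY : Y ∈ Submodule.span ℂ {J, S}) :
    X * Y ∈ Submodule.span ℂ {1, J} := by
  obtain ⟨a, b, rfl⟩ := Submodule.mem_span_pair.1 hX
  obtain ⟨c, d, rfl⟩ := Submodule.mem_span_pair.1 hY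
  refine Submodule.mem_span_pair.2 ⟨b * d, a * c * N + a * d + b * c, ?_⟩
  simp only [add_mul, mul_add, smul_mul_smul_comm, phiPlusDyad_mul_self, phiPlusDyad_mul_swapOp,
    swapOp_mul_phiPlusDyad, swapOp_mul_swapOp]
  module

theorem mul_mem_span_phiPlusDyad_swapOp {X Y : Matrix (Fin N × Fin N) (Fin N × Fin N) ℂ}
    (hX : X ∈ Submodule.span ℂ {1, J}) (hY : Y ∈ Submodule.span ℂ {J, S}) :
    X * Y ∈ Submodule.span ℂ {J, S} := by
  obtain ⟨a, b, rfl⟩ := Submodule.mem_span_pair.1 hX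
  obtain ⟨c, d, rfl⟩ := Submodule.mem_span_pair.1 hY
  refine Submodule.mem_span_pair.2 ⟨a * c + b * c * N + b * d, a * d, ?_⟩
  simp only [add_mul, mul_add, smul_mul_smul_comm, one_mul, phiPlusDyad_mul_self,
    phiPlusDyad_mul_swapOp]
  module

theorem trace_resh_mul_eq_zero {X Y : Matrix (Fin N × Fin N) (Fin N × Fin N) ℂ}
    (htr : X.trace = 0) (horth : (X * S).trace = 0) (hY : Y ∈ Submodule.span ℂ {J, S}) :
    (resh N X * Y).trace = 0 := by
  obtain ⟨a, b, rfl⟩ := Submodule.mem_span_pair.1 hY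
  simp [mul_add, trace_resh_mul_phiPlusDyad, trace_resh_mul_swapOp, htr, horth]

section

attribute [local instance] Matrix.linftyOpNormedRing Matrix.linftyOpNormedAlgebra

theorem resh_Ut (t : ℝ) :
    resh N (Ut N t) = (Real.cos t : ℂ) • J + (Complex.I * Real.sin t) • S := by
  have hUt : Ut N t = (Real.cos t : ℂ) • 1 + (Complex.I * Real.sin t) • S :=
    NormedSpace.exp_I_mul_smul_of_mul_self swapOp_mul_swapOp t
  rw [hUt, resh_add, resh_smul, resh_smul, resh_one, resh_swapOp]

end

theorem resh_Ut_mem_span (t : ℝ) : resh N (Ut N t) ∈ Submodule.span ℂ {J, S} :=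
  Submodule.mem_span_pair.2 ⟨_, _, (resh_Ut t).symm⟩

theorem trace_deltaUt {t ε : ℝ} {H : Matrix (Fin N × Fin N) (Fin N × Fin N) ℂ}
    (htr : H.trace = 0) (horth : (H * S).trace = 0) : (deltaUt N t ε H).trace = 0 := by
  simp [deltaUt, trace_mul_comm S H, htr, horth]

theorem trace_deltaUt_mul_swapOp {t ε : ℝ} {H : Matrix (Fin N × Fin N) (Fin N × Fin N) ℂ}
    (htr : H.trace = 0) (horth : (H * S).trace = 0) : (deltaUt N t ε H * S).trace = 0 := by
  have hSHS : (S * H * S).trace = 0 := by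
    rw [trace_mul_comm, ← Matrix.mul_assoc, swapOp_mul_swapOp, Matrix.one_mul, htr]
  simp [deltaUt, add_mul, horth, hSHS]

end Reshuffle

open Reshuffle

theorem swap_powers_stationary_general (N : ℕ) (t ε : ℝ)
    (H : Matrix (Fin N × Fin N) (Fin N × Fin N) ℂ)
    (htr : H.trace = 0) (horth : (H * swapOp N).trace = 0) :
    (Matrix.trace (resh N (deltaUt N t ε H) * (resh N (Ut N t))ᴴ *
      resh N (Ut N t) * (resh N (Ut N t))ᴴ)).re = 0 := by
  have hU := resh_Ut_mem_span (N := N) t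
  have hUdag := conjTranspose_mem_span hU
  have hprod : (resh N (Ut N t))ᴴ * resh N (Ut N t) * (resh N (Ut N t))ᴴ ∈
      Submodule.span ℂ {phiPlusDyad N, swapOp N} :=
    mul_mem_span_phiPlusDyad_swapOp (mul_mem_span_one_phiPlusDyad hUdag hU) hUdag
  rw [Matrix.mul_assoc, Matrix.mul_assoc, ← Matrix.mul_assoc (resh N (Ut N t))ᴴ,
    trace_resh_mul_eq_zero (trace_deltaUt htr horth) (trace_deltaUt_mul_swapOp htr horth) hprod,
    zero_re]

/-- Stationarity of the powers of swap: for a traceless Hermitian `H` orthogonal to `S`,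
the first-order variation of the operator entanglement `E` along the perturbation
`δU_t` of `U_t = exp(itS)` vanishes:
`Re Tr(δU_t^R U_t^{R†} U_t^R U_t^{R†}) = 0`. -/
theorem swap_powers_stationary (N : ℕ) (hN : 2 ≤ N) (t ε : ℝ)
    (H : Matrix (Fin N × Fin N) (Fin N × Fin N) ℂ)
    (hHerm : Hᴴ = H) (htr : H.trace = 0) (horth : (H * swapOp N).trace = 0) :
    (Matrix.trace (resh N (deltaUt N t ε H) * (resh N (Ut N t))ᴴ *
      resh N (Ut N t) * (resh N (Ut N t))ᴴ)).re = 0 :=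
  swap_powers_stationary_general N t ε H htr horth
end
end
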